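/- arXiv:2309.01349 — 3 statements merged into one kernel-verified Lean document; each statement's English description precedes it below -/
import Mathlib

section
/- Every real-valued slowly oscillating continuous function on a proper metric space is uniformly continuous. -/
open Metric Set

theorem stmt_0 {X : Type*} [MetricSpace X] [ProperSpace X]
    (f : X → ℝ) (hf : Continuous f)
    (hso : ∀ R : ℝ, 0 < R → ∀ ε : ℝ, 0 < ε → ∃ K : Set X, IsCompact K ∧
      ∀ x ∉ K, Metric.diam (f '' Metric.closedBall x R) < ε) :
    UniformContinuous f := by
  rw [Metric.uniformContinuous_iff]
  intro ε hε
  obtain ⟨K, hK, hdiam⟩ := hso 1 one_pos ε hε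
  have hK1 : IsCompact (Metric.cthickening 2 K) := hK.cthickening
  have hucK : UniformContinuousOn f (Metric.cthickening 2 K) :=
    hK1.uniformContinuousOn_of_continuous hf.continuousOn
  rw [Metric.uniformContinuousOn_iff] at hucK
  obtain ⟨δ', hδ', hδ⟩ := hucK ε hε
  refine ⟨min δ' 1, lt_min hδ' one_pos, ?_⟩
  intro x y hxy
  have h1 : dist x y < 1 := lt_of_lt_of_le hxy (min_le_right _ _)
  by_cases hx : x ∈ K
  · exact hδ x (self_subset_cthickening K hx) y
      (mem_cthickening_of_dist_le y x 2 K hx (by rw [dist_comm]; linarith))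
      (lt_of_lt_of_le hxy (min_le_left _ _))
  · have hy : y ∈ Metric.closedBall x 1 := by
      rw [Metric.mem_closedBall, dist_comm]; linarith
    have hxx : x ∈ Metric.closedBall x 1 := Metric.mem_closedBall_self one_pos.le
    calc dist (f x) (f y)
        ≤ Metric.diam (f '' Metric.closedBall x 1) :=
          Metric.dist_le_diam_of_mem
            (((isCompact_closedBall x 1).image hf).isBounded)
            (mem_image_of_mem f hxx) (mem_image_of_mem f hy)
      _ < ε := hdiam x hx
end

section
/- Every lattice-linear homomorphism φ on SO with φ(1) = 1 is an evaluation homomorphism: there exists a point x ∈ [0,∞) such that φ(f) = f(x) for every slowly oscillating continuous f. Moreover this point is unique. -/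
open Filter Metric Set

noncomputable section

/-- A continuous function on the half-line `[0,∞)` (modeled as `ℝ≥0`) is
slowly oscillating if for every `R > 0` and `ε > 0` there is `M > 0` with
`diam f([x, x+R]) < ε` for all `x > M`. -/
def SO (f : NNReal → ℝ) : Prop :=
  Continuous f ∧ ∀ R : NNReal, 0 < R → ∀ ε : ℝ, 0 < ε → ∃ M : NNReal, 0 < M ∧
    ∀ x : NNReal, M < x → Metric.diam (f '' Set.Icc x (x + R)) < ε

lemma so_mk {f : NNReal → ℝ} (hc : Continuous f)
    (H : ∀ R : NNReal, 0 < R → ∀ ε : ℝ, 0 < ε → ∃ M : NNReal, 0 < M ∧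
      ∀ x, M < x → ∀ a ∈ Set.Icc x (x+R), ∀ b ∈ Set.Icc x (x+R), dist (f a) (f b) ≤ ε) :
    SO f := by
  refine ⟨hc, fun R hR ε hε => ?_⟩
  obtain ⟨M, hM, h⟩ := H R hR (ε/2) (half_pos hε)
  refine ⟨M, hM, fun x hx => lt_of_le_of_lt ?_ (half_lt_self hε)⟩
  apply Metric.diam_le_of_forall_dist_le (le_of_lt (half_pos hε))
  rintro p ⟨a, ha, rfl⟩ q ⟨b, hb, rfl⟩
  exact h x hx a ha b hb

lemma so_elim {f : NNReal → ℝ} (hf : SO f) (R : NNReal) (hR : 0 < R) (ε : ℝ) (hε : 0 < ε) :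
    ∃ M : NNReal, 0 < M ∧ ∀ x, M < x → ∀ a ∈ Set.Icc x (x+R), ∀ b ∈ Set.Icc x (x+R),
      dist (f a) (f b) < ε := by
  obtain ⟨M, hM, h⟩ := hf.2 R hR ε hε
  refine ⟨M, hM, fun x hx a ha b hb => lt_of_le_of_lt ?_ (h x hx)⟩
  exact Metric.dist_le_diam_of_mem ((isCompact_Icc.image hf.1).isBounded)
    ⟨a, ha, rfl⟩ ⟨b, hb, rfl⟩

lemma so_const (c : ℝ) : SO (fun _ => c) := by
  refine so_mk continuous_const fun R hR ε hε => ⟨1, one_pos, fun x hx a _ b _ => ?_⟩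
  simp [dist_self, le_of_lt hε]

lemma so_comb {f g : NNReal → ℝ} (hf : SO f) (hg : SO g) (c d : ℝ) :
    SO (c • f + d • g) := by
  have hcont : Continuous (c • f + d • g) := (hf.1.const_smul c).add (hg.1.const_smul d)
  refine so_mk hcont fun R hR ε hε => ?_
  obtain ⟨M₁, hM₁, h₁⟩ := so_elim hf R hR (ε/(2*(|c|+1))) (by positivity)
  obtain ⟨M₂, hM₂, h₂⟩ := so_elim hg R hR (ε/(2*(|d|+1))) (by positivity)
  refine ⟨max M₁ M₂, lt_of_lt_of_le hM₁ (le_max_left _ _), fun x hx a ha b hb => ?_⟩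
  have e1 := h₁ x (lt_of_le_of_lt (le_max_left _ _) hx) a ha b hb
  have e2 := h₂ x (lt_of_le_of_lt (le_max_right _ _) hx) a ha b hb
  have key : dist ((c • f + d • g) a) ((c • f + d • g) b)
      ≤ |c| * dist (f a) (f b) + |d| * dist (g a) (g b) := by
    simp only [Pi.add_apply, Pi.smul_apply, smul_eq_mul, Real.dist_eq]
    calc |c * f a + d * g a - (c * f b + d * g b)|
        = |c * (f a - f b) + d * (g a - g b)| := by ring_nf
      _ ≤ |c * (f a - f b)| + |d * (g a - g b)| := abs_add_le _ _
      _ = |c| * |f a - f b| + |d| * |g a - g b| := by rw [abs_mul, abs_mul]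
  have hc' : |c| * (ε/(2*(|c|+1))) ≤ ε/2 := by
    rw [mul_comm, div_mul_eq_mul_div, div_le_div_iff₀ (by positivity) (by norm_num)]
    nlinarith [abs_nonneg c, hε.le]
  have hd' : |d| * (ε/(2*(|d|+1))) ≤ ε/2 := by
    rw [mul_comm, div_mul_eq_mul_div, div_le_div_iff₀ (by positivity) (by norm_num)]
    nlinarith [abs_nonneg d, hε.le]
  have := add_le_add (mul_le_mul_of_nonneg_left e1.le (abs_nonneg c))
    (mul_le_mul_of_nonneg_left e2.le (abs_nonneg d))
  linarith

lemma so_sup {f g : NNReal → ℝ} (hf : SO f) (hg : SO g) : SO (f ⊔ g) := by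
  have hcont : Continuous (f ⊔ g) := hf.1.max hg.1
  refine so_mk hcont fun R hR ε hε => ?_
  obtain ⟨M₁, hM₁, h₁⟩ := so_elim hf R hR ε hε
  obtain ⟨M₂, hM₂, h₂⟩ := so_elim hg R hR ε hε
  refine ⟨max M₁ M₂, lt_of_lt_of_le hM₁ (le_max_left _ _), fun x hx a ha b hb => ?_⟩
  have e1 := h₁ x (lt_of_le_of_lt (le_max_left _ _) hx) a ha b hb
  have e2 := h₂ x (lt_of_le_of_lt (le_max_right _ _) hx) a ha b hb
  have : dist ((f ⊔ g) a) ((f ⊔ g) b) ≤ max (dist (f a) (f b)) (dist (g a) (g b)) := by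
    simp only [Pi.sup_apply, Real.dist_eq]
    exact abs_max_sub_max_le_max _ _ _ _
  exact this.trans (max_le e1.le e2.le)

lemma so_sqrt : SO (fun x : NNReal => Real.sqrt x) := by
  refine so_mk (Real.continuous_sqrt.comp NNReal.continuous_coe) fun R hR ε hε => ?_
  refine ⟨⟨((R:ℝ)/ε)^2, sq_nonneg _⟩ + 1, by positivity, fun x hx a ha b hb => ?_⟩
  have hxR : ((R:ℝ)/ε)^2 < (x:ℝ) := by
    have := (NNReal.coe_lt_coe.mpr hx)
    change ((R:ℝ)/ε)^2 + 1 < (x:ℝ) at this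
    nlinarith [NNReal.coe_nonneg x]
  have hx0 : (0:ℝ) < x := lt_of_le_of_lt (sq_nonneg _) hxR
  have hsx : (R:ℝ)/ε < Real.sqrt x := by
    have h1 : Real.sqrt (((R:ℝ)/ε)^2) < Real.sqrt x := Real.sqrt_lt_sqrt (sq_nonneg _) hxR
    rwa [Real.sqrt_sq (by positivity)] at h1
  have hkey : Real.sqrt ((x:ℝ)+R) - Real.sqrt x ≤ ε := by
    set s := Real.sqrt x with hs
    set t := Real.sqrt ((x:ℝ)+R) with ht
    have hs2 : s^2 = x := Real.sq_sqrt hx0.le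
    have ht2 : t^2 = (x:ℝ)+R := Real.sq_sqrt (by positivity)
    have hst : s ≤ t := Real.sqrt_le_sqrt (by linarith [NNReal.coe_nonneg R])
    have hs0 : 0 < s := Real.sqrt_pos.mpr hx0
    have h2 : (t - s) * s ≤ (R:ℝ) := by nlinarith
    have h3 : (R:ℝ) ≤ ε * s := by
      have := (div_lt_iff₀ hε).mp hsx
      nlinarith
    exact le_of_mul_le_mul_right (h2.trans h3) hs0
  -- now bound dist
  rcases ha with ⟨hax, haR⟩
  rcases hb with ⟨hbx, hbR⟩
  have bounds : ∀ y : NNReal, x ≤ y → y ≤ x + R →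
      Real.sqrt x ≤ Real.sqrt y ∧ Real.sqrt y ≤ Real.sqrt ((x:ℝ)+R) := by
    intro y h1 h2
    constructor
    · exact Real.sqrt_le_sqrt (NNReal.coe_le_coe.mpr h1)
    · apply Real.sqrt_le_sqrt
      have := NNReal.coe_le_coe.mpr h2
      push_cast at this; linarith
  obtain ⟨a1, a2⟩ := bounds a hax haR
  obtain ⟨b1, b2⟩ := bounds b hbx hbR
  rw [Real.dist_eq, abs_le]
  constructor <;> linarith
/-- A lattice-linear homomorphism of the vector lattice `SO`, encoded as a
function on all of `NNReal → ℝ` whose homomorphism properties are required on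
slowly oscillating functions. -/
def IsHom (φ : (NNReal → ℝ) → ℝ) : Prop :=
  (∀ f g : NNReal → ℝ, SO f → SO g → ∀ c d : ℝ,
      φ (c • f + d • g) = c * φ f + d * φ g) ∧
  (∀ f g : NNReal → ℝ, SO f → SO g → φ (f ⊔ g) = φ f ⊔ φ g) ∧
  (∀ f g : NNReal → ℝ, SO f → SO g → φ (f ⊓ g) = φ f ⊓ φ g)

theorem stmt_4 (φ : (NNReal → ℝ) → ℝ) (hφ : IsHom φ) (h1 : φ 1 = 1) :
    ∃! x : NNReal, ∀ f : NNReal → ℝ, SO f → φ f = f x := by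
  obtain ⟨hlin, hsup, hinf⟩ := hφ
  have hso1 : SO (1 : NNReal → ℝ) := so_const 1
  have hconst : ∀ c : ℝ, φ (fun _ => c) = c := by
    intro c
    have h := hlin 1 1 hso1 hso1 c 0
    have e : (c • (1:NNReal→ℝ) + (0:ℝ) • 1) = (fun _ => c) := by funext x; simp
    rw [e] at h
    rw [h, h1]; ring
  have hmono : ∀ f g : NNReal → ℝ, SO f → SO g → (∀ x, f x ≤ g x) → φ f ≤ φ g := by
    intro f g hf hg hle
    have hfg : f ⊔ g = g := by funext x; exact sup_eq_right.mpr (hle x)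
    have h2 := hsup f g hf hg
    rw [hfg] at h2
    calc φ f ≤ φ f ⊔ φ g := le_sup_left
      _ = φ g := h2.symm
  have hneg : ∀ f : NNReal → ℝ, SO f → SO (-f) ∧ φ (-f) = -φ f := by
    intro f hf
    have e : (-1:ℝ) • f + (0:ℝ) • f = -f := by funext x; simp
    constructor
    · rw [← e]; exact so_comb hf hf (-1) 0
    · have h2 := hlin f f hf hf (-1) 0; rw [e] at h2; rw [h2]; ring
  have habs : ∀ f : NNReal → ℝ, SO f → SO (f ⊔ (-f)) ∧ φ (f ⊔ (-f)) = φ f ⊔ (-(φ f))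
      ∧ ∀ x, (f ⊔ (-f)) x = |f x| := by
    intro f hf
    obtain ⟨hn, hn2⟩ := hneg f hf
    refine ⟨so_sup hf hn, ?_, ?_⟩
    · rw [hsup f (-f) hf hn, hn2]
    · intro x; simp [Pi.sup_apply, abs_eq_max_neg]
  have main_tool : ∀ f : NNReal → ℝ, SO f →
      ∃ g : NNReal → ℝ, SO g ∧ φ g = 0 ∧ ∀ x, g x = |f x - φ f| := by
    intro f hf
    set d := φ f with hd
    have e : (1:ℝ) • f + (-d) • (1:NNReal→ℝ) = fun x => f x - d := by
      funext x; simp; ring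
    have hg0 : SO (fun x => f x - d) := by rw [← e]; exact so_comb hf hso1 1 (-d)
    have hφg0 : φ (fun x => f x - d) = 0 := by
      rw [← e, hlin f 1 hf hso1 1 (-d), h1]; ring
    obtain ⟨hA, hA2, hA3⟩ := habs _ hg0
    refine ⟨_, hA, ?_, fun x => by rw [hA3]⟩
    rw [hA2, hφg0]; simp
  -- the square root function
  have hu : SO (fun x : NNReal => Real.sqrt x) := so_sqrt
  set u : NNReal → ℝ := fun x => Real.sqrt x with hu_def
  set c := φ u with hc_def
  obtain ⟨h, hSh, hφh, hhx⟩ := main_tool u hu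
  have hhx' : ∀ x : NNReal, h x = |Real.sqrt x - c| := hhx
  have hhpos : ∀ x, 0 ≤ h x := fun x => (hhx' x) ▸ abs_nonneg _
  have hc0 : 0 ≤ c := by
    by_contra hcneg
    push_neg at hcneg
    have hle : ∀ x, (fun _ => -c : NNReal → ℝ) x ≤ h x := by
      intro x
      show -c ≤ h x
      rw [hhx']
      have : 0 ≤ Real.sqrt x := Real.sqrt_nonneg _
      rw [abs_of_nonneg (by linarith)]
      linarith
    have := hmono _ h (so_const (-c)) hSh hle
    rw [hconst, hφh] at this
    linarith
  set x₀ : NNReal := ⟨c^2, sq_nonneg c⟩ with hx₀_def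
  have hx₀coe : (x₀ : ℝ) = c^2 := rfl
  have main : ∀ f : NNReal → ℝ, SO f → φ f = f x₀ := by
    intro f hf
    by_contra hne
    obtain ⟨g, hSg, hφg, hgx⟩ := main_tool f hf
    have hgpos : ∀ x, 0 ≤ g x := fun x => (hgx x) ▸ abs_nonneg _
    have hgx₀ : 0 < g x₀ := by
      rw [hgx]
      exact abs_pos.mpr (sub_ne_zero.mpr (Ne.symm hne))
    set k := (1:ℝ) • g + (1:ℝ) • h with hk_def
    have hSk : SO k := so_comb hSg hSh 1 1
    have hφk : φ k = 0 := by rw [hk_def, hlin g h hSg hSh 1 1, hφg, hφh]; ring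
    have hkx : ∀ x, k x = g x + h x := by intro x; simp [hk_def]
    have hkpos : ∀ x, 0 < k x := by
      intro x
      rcases eq_or_ne x x₀ with rfl | hx
      · rw [hkx]; linarith [hhpos x₀]
      · have hs : Real.sqrt x ≠ c := by
          intro h'
          apply hx
          apply NNReal.coe_injective
          rw [hx₀coe, ← h', Real.sq_sqrt x.coe_nonneg]
        have : 0 < h x := by rw [hhx']; exact abs_pos.mpr (sub_ne_zero.mpr hs)
        rw [hkx]; linarith [hgpos x]
    set A : NNReal := ⟨(c+1)^2, sq_nonneg _⟩ with hA_def
    have hAcoe : (A : ℝ) = (c+1)^2 := rfl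
    obtain ⟨z, hz, hmin⟩ := (isCompact_Icc (a := (0:NNReal)) (b := A)).exists_isMinOn
      ⟨0, le_refl _, zero_le⟩ hSk.1.continuousOn
    set δ := min (k z) 1 with hδ_def
    have hδ : 0 < δ := lt_min (hkpos z) one_pos
    have hδk : ∀ x, (fun _ => δ : NNReal → ℝ) x ≤ k x := by
      intro x
      rcases le_or_gt x A with hxA | hxA
      · exact (min_le_left _ _).trans (isMinOn_iff.mp hmin x ⟨zero_le, hxA⟩)
      · have h1' : (c+1)^2 < (x:ℝ) := by
          rw [← hAcoe]; exact_mod_cast hxA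
        have h2 : c + 1 < Real.sqrt x := by
          have := Real.sqrt_lt_sqrt (sq_nonneg _) h1'
          rwa [Real.sqrt_sq (by linarith)] at this
        have h3 : 1 ≤ h x := by
          rw [hhx', abs_of_nonneg (by linarith)]; linarith
        calc (fun _ => δ : NNReal → ℝ) x ≤ 1 := min_le_right _ _
          _ ≤ k x := by rw [hkx]; linarith [hgpos x]
    have := hmono _ k (so_const δ) hSk hδk
    rw [hconst, hφk] at this
    linarith
  refine ⟨x₀, main, ?_⟩
  intro y hy
  have h0 := hy h hSh
  rw [hφh] at h0
  have hsy : Real.sqrt y = c := by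
    have h2 := hhx' y
    rw [← h0] at h2
    have := abs_eq_zero.mp h2.symm
    linarith
  apply NNReal.coe_injective
  rw [hx₀coe, ← hsy, Real.sq_sqrt y.coe_nonneg]
end
end

section
/- For every strictly increasing sequence a : ℕ → ℕ, the associated function η_a : [0,∞) → ℝ is well-defined (the pointwise limit of η_a^n exists), continuous, slowly oscillating, and satisfies η_a ≥ 1. -/
open Filter Metric Set

noncomputable section

/-- The approximating functions `η_a^n`: `η_a^0 (x) = x + 1`, and
`η_a^{n+1}` agrees with `η_a^n` below `a (n+1)` and grows with slope
`1/(n+1)` above it. -/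
noncomputable def etaAux (a : ℕ → ℕ) : ℕ → NNReal → ℝ
  | 0 => fun x => (x : ℝ) + 1
  | n + 1 => fun x =>
      if x < (a (n + 1) : NNReal) then etaAux a n x
      else etaAux a n (a (n + 1) : NNReal) + ((x : ℝ) - (a (n + 1) : ℝ)) / (n + 1)

/-- The slowly oscillating function `η_a` associated to a strictly increasing
sequence `a`, the pointwise limit (infimum) of the decreasing sequence `η_a^n`. -/
noncomputable def eta (a : ℕ → ℕ) (x : NNReal) : ℝ := ⨅ n, etaAux a n x


section aux
variable (a : ℕ → ℕ)

lemma etaAux_lower : ∀ n (x y : NNReal), y ≤ x →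
    ((x : ℝ) - (y : ℝ)) / (n + 1) ≤ etaAux a n x - etaAux a n y := by
  intro n
  induction n with
  | zero => intro x y _; simp [etaAux]
  | succ n ih =>
    intro x y hyx
    have hn1 : (0:ℝ) < (n:ℝ) + 1 := by positivity
    have hxy : (y:ℝ) ≤ (x:ℝ) := hyx
    simp only [etaAux]
    by_cases hx : x < (a (n+1) : NNReal)
    · have hy : y < (a (n+1) : NNReal) := lt_of_le_of_lt hyx hx
      rw [if_pos hx, if_pos hy]
      have h1 := ih x y hyx
      have h2 : ((x:ℝ) - y) / ((n:ℝ) + 1 + 1) ≤ ((x:ℝ) - y) / ((n:ℝ) + 1) := by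
        apply div_le_div_of_nonneg_left (by linarith) hn1 (by linarith)
      push_cast
      linarith
    · rw [if_neg hx]
      have hcx : ((a (n+1) : ℕ):ℝ) ≤ (x:ℝ) := by exact_mod_cast not_lt.mp hx
      by_cases hy : y < (a (n+1) : NNReal)
      · rw [if_pos hy]
        have hyc : (y:ℝ) ≤ ((a (n+1) : ℕ):ℝ) := by exact_mod_cast le_of_lt hy
        have h1 := ih (a (n+1) : NNReal) y (le_of_lt hy)
        have h2 : ((x:ℝ) - y) / ((n:ℝ) + 1 + 1) ≤ ((x:ℝ) - y) / ((n:ℝ) + 1) := by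
          apply div_le_div_of_nonneg_left (by linarith) hn1 (by linarith)
        have h3 : ((x:ℝ) - y) / ((n:ℝ) + 1)
            = (((a (n+1) : ℕ):ℝ) - y)/((n:ℝ)+1) + ((x:ℝ) - ((a (n+1) : ℕ):ℝ))/((n:ℝ)+1) := by
          ring
        push_cast at h1 h2 h3 ⊢
        linarith
      · rw [if_neg hy]
        have hcy : ((a (n+1) : ℕ):ℝ) ≤ (y:ℝ) := by exact_mod_cast not_lt.mp hy
        have h2 : ((x:ℝ) - y) / ((n:ℝ) + 1 + 1) ≤ ((x:ℝ) - y) / ((n:ℝ) + 1) := by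
          apply div_le_div_of_nonneg_left (by linarith) hn1 (by linarith)
        have h3 : ((x:ℝ) - ((a (n+1) : ℕ):ℝ))/((n:ℝ)+1) - ((y:ℝ) - ((a (n+1) : ℕ):ℝ))/((n:ℝ)+1)
            = ((x:ℝ) - y)/((n:ℝ)+1) := by
          ring
        push_cast at h2 h3 ⊢
        linarith

lemma etaAux_upper : ∀ n (x y : NNReal), y ≤ x →
    etaAux a n x - etaAux a n y ≤ (x : ℝ) - (y : ℝ) := by
  intro n
  induction n with
  | zero => intro x y _; simp [etaAux]
  | succ n ih =>
    intro x y hyx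
    have hn1 : (0:ℝ) < (n:ℝ) + 1 := by positivity
    have hxy : (y:ℝ) ≤ (x:ℝ) := hyx
    simp only [etaAux]
    by_cases hx : x < (a (n+1) : NNReal)
    · have hy : y < (a (n+1) : NNReal) := lt_of_le_of_lt hyx hx
      rw [if_pos hx, if_pos hy]
      exact ih x y hyx
    · rw [if_neg hx]
      have hcx : ((a (n+1) : ℕ):ℝ) ≤ (x:ℝ) := by exact_mod_cast not_lt.mp hx
      have hdivle : ((x:ℝ) - ((a (n+1) : ℕ):ℝ)) / ((n:ℝ) + 1) ≤ (x:ℝ) - ((a (n+1) : ℕ):ℝ) := by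
        apply div_le_self (by linarith) (by linarith)
      by_cases hy : y < (a (n+1) : NNReal)
      · rw [if_pos hy]
        have h1 := ih (a (n+1) : NNReal) y (le_of_lt hy)
        push_cast at h1 hdivle ⊢
        linarith
      · rw [if_neg hy]
        have hcy : ((a (n+1) : ℕ):ℝ) ≤ (y:ℝ) := by exact_mod_cast not_lt.mp hy
        have h3 : ((x:ℝ) - ((a (n+1) : ℕ):ℝ))/((n:ℝ)+1) - ((y:ℝ) - ((a (n+1) : ℕ):ℝ))/((n:ℝ)+1)
            = ((x:ℝ) - y)/((n:ℝ)+1) := by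
          ring
        have h4 : ((x:ℝ) - y)/((n:ℝ)+1) ≤ (x:ℝ) - y := div_le_self (by linarith) (by linarith)
        push_cast at h3 h4 ⊢
        linarith

lemma etaAux_mono (n : ℕ) : Monotone (etaAux a n) := by
  intro y x hyx
  have h := etaAux_lower a n x y hyx
  have : (0:ℝ) ≤ ((x:ℝ) - y) / (n + 1) := by
    apply div_nonneg _ (by positivity)
    have : (y:ℝ) ≤ x := hyx
    linarith
  linarith

lemma etaAux_lipschitz (n : ℕ) : LipschitzWith 1 (etaAux a n) := by
  apply LipschitzWith.of_dist_le_mul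
  intro x y
  rw [Real.dist_eq, NNReal.dist_eq, NNReal.coe_one, one_mul]
  rcases le_total y x with h | h
  · have h1 := etaAux_upper a n x y h
    have h2 := etaAux_mono a n h
    have h3 : (y:ℝ) ≤ (x:ℝ) := h
    rw [abs_of_nonneg (by linarith), abs_of_nonneg (by linarith)]
    exact h1
  · have h1 := etaAux_upper a n y x h
    have h2 := etaAux_mono a n h
    have h3 : (x:ℝ) ≤ (y:ℝ) := h
    rw [abs_of_nonpos (by linarith), abs_of_nonpos (by linarith)]
    linarith

lemma etaAux_anti (x : NNReal) : Antitone (fun n => etaAux a n x) := by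
  apply antitone_nat_of_succ_le
  intro n
  show etaAux a (n+1) x ≤ etaAux a n x
  simp only [etaAux]
  by_cases hx : x < (a (n+1) : NNReal)
  · rw [if_pos hx]
  · rw [if_neg hx]
    have h := etaAux_lower a n x (a (n+1) : NNReal) (not_lt.mp hx)
    push_cast at h ⊢
    linarith

lemma etaAux_one_le (n : ℕ) (x : NNReal) : 1 ≤ etaAux a n x := by
  induction n generalizing x with
  | zero => simp [etaAux]
  | succ n ih =>
    simp only [etaAux]
    by_cases hx : x < (a (n+1) : NNReal)
    · rw [if_pos hx]; exact ih x
    · rw [if_neg hx]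
      have hcx : ((a (n+1) : NNReal) : ℝ) ≤ (x:ℝ) := by exact_mod_cast not_lt.mp hx
      have := ih (a (n+1) : NNReal)
      have hd : (0:ℝ) ≤ ((x:ℝ) - (a (n+1) : ℝ)) / ((n:ℝ) + 1) := by
        apply div_nonneg _ (by positivity)
        push_cast at hcx ⊢
        linarith
      push_cast at hd ⊢
      linarith

lemma etaAux_bdd (x : NNReal) : BddBelow (Set.range fun n => etaAux a n x) := by
  refine ⟨1, ?_⟩
  rintro _ ⟨n, rfl⟩
  exact etaAux_one_le a n x

lemma etaAux_stable (hmono : Monotone a) : ∀ N (x : NNReal), x < (a N : NNReal) → ∀ m, N ≤ m →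
    etaAux a m x = etaAux a N x := by
  intro N x hx m hm
  induction m, hm using Nat.le_induction with
  | base => rfl
  | succ m hm ih =>
    have h1 : x < (a (m+1) : NNReal) := by
      refine lt_of_lt_of_le hx ?_
      exact_mod_cast Nat.cast_le.mpr (hmono (by omega : N ≤ m + 1))
    rw [show etaAux a (m+1) x = etaAux a m x from by simp only [etaAux]; rw [if_pos h1], ih]


lemma etaAux_slope (hmono : Monotone a) (n : ℕ) : ∀ m, n + 1 ≤ m → ∀ y z : NNReal,
    (a (n+1) : NNReal) ≤ y → y ≤ z →
    etaAux a m z - etaAux a m y ≤ ((z:ℝ) - (y:ℝ)) / ((n:ℝ) + 1) := by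
  intro m hm
  induction m, hm using Nat.le_induction with
  | base =>
    intro y z hay hyz
    have hz : ¬ z < (a (n+1) : NNReal) := not_lt.mpr (hay.trans hyz)
    have hy : ¬ y < (a (n+1) : NNReal) := not_lt.mpr hay
    simp only [etaAux]
    rw [if_neg hz, if_neg hy]
    push_cast
    exact le_of_eq (by ring)
  | succ m hm ih =>
    intro y z hay hyz
    have hn1 : (0:ℝ) < (n:ℝ) + 1 := by positivity
    have hm1 : (0:ℝ) < (m:ℝ) + 1 := by positivity
    have hnm : (n:ℝ) + 1 ≤ (m:ℝ) + 1 := add_le_add_left (Nat.cast_le.mpr (Nat.le_of_succ_le hm)) 1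
    have hyzR : (y:ℝ) ≤ (z:ℝ) := hyz
    simp only [etaAux]
    by_cases hz : z < (a (m+1) : NNReal)
    · have hy : y < (a (m+1) : NNReal) := lt_of_le_of_lt hyz hz
      rw [if_pos hz, if_pos hy]
      exact ih y z hay hyz
    · rw [if_neg hz]
      have hcz : ((a (m+1) : ℕ):ℝ) ≤ (z:ℝ) := by exact_mod_cast not_lt.mp hz
      have hdiv : ((z:ℝ) - ((a (m+1):ℕ):ℝ)) / ((m:ℝ)+1) ≤ ((z:ℝ) - ((a (m+1):ℕ):ℝ)) / ((n:ℝ)+1) := by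
        apply div_le_div_of_nonneg_left (by linarith) hn1 hnm
      by_cases hy : y < (a (m+1) : NNReal)
      · rw [if_pos hy]
        have hyc : (y:ℝ) ≤ ((a (m+1):ℕ):ℝ) := by exact_mod_cast le_of_lt hy
        have h1 := ih y (a (m+1) : NNReal) hay (le_of_lt hy)
        have h3 : (((a (m+1):ℕ):ℝ) - y)/((n:ℝ)+1) + ((z:ℝ) - ((a (m+1):ℕ):ℝ))/((n:ℝ)+1)
            = ((z:ℝ) - y)/((n:ℝ)+1) := by ring
        push_cast at h1 h3 hdiv ⊢
        linarith
      · rw [if_neg hy]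
        have hcy : ((a (m+1):ℕ):ℝ) ≤ (y:ℝ) := by exact_mod_cast not_lt.mp hy
        have h3 : ((z:ℝ) - ((a (m+1):ℕ):ℝ))/((m:ℝ)+1) - ((y:ℝ) - ((a (m+1):ℕ):ℝ))/((m:ℝ)+1)
            = ((z:ℝ) - y)/((m:ℝ)+1) := by ring
        have h4 : ((z:ℝ) - y)/((m:ℝ)+1) ≤ ((z:ℝ) - y)/((n:ℝ)+1) :=
          div_le_div_of_nonneg_left (by linarith) hn1 hnm
        push_cast at h3 h4 ⊢
        linarith

lemma eta_eq (hmono : Monotone a) (N : ℕ) (x : NNReal) (hx : x < (a N : NNReal)) :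
    eta a x = etaAux a N x := by
  apply le_antisymm
  · exact ciInf_le (etaAux_bdd a x) N
  · apply le_ciInf
    intro n
    rcases le_or_gt N n with h | h
    · rw [etaAux_stable a hmono N x hx n h]
    · exact etaAux_anti a x (le_of_lt h)

lemma exists_lt (ha : StrictMono a) (x : NNReal) : ∃ N, x < (a N : NNReal) := by
  refine ⟨⌊x⌋₊ + 1, lt_of_lt_of_le (Nat.lt_floor_add_one x) ?_⟩
  have h1 : (⌊x⌋₊ + 1 : ℕ) ≤ a (⌊x⌋₊ + 1) := ha.le_apply
  calc ((⌊x⌋₊ : NNReal) + 1) = ((⌊x⌋₊ + 1 : ℕ) : NNReal) := by push_cast; ring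
  _ ≤ (a (⌊x⌋₊ + 1) : NNReal) := by exact_mod_cast h1


end aux

theorem stmt_8 (a : ℕ → ℕ) (ha : StrictMono a) :
    (∀ x : NNReal, Filter.Tendsto (fun n => etaAux a n x) Filter.atTop (nhds (eta a x))) ∧
    Continuous (eta a) ∧ SO (eta a) ∧ ∀ x, 1 ≤ eta a x := by
  have hmono : Monotone a := ha.monotone
  have hone : ∀ x, 1 ≤ eta a x := by
    intro x
    apply le_ciInf
    intro n
    exact etaAux_one_le a n x
  have heq : ∀ (N : ℕ) (x : NNReal), x < (a N : NNReal) → eta a x = etaAux a N x :=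
    eta_eq a hmono
  have hmonoeta : Monotone (eta a) := by
    intro y z hyz
    obtain ⟨N, hN⟩ := exists_lt a ha z
    rw [heq N z hN, heq N y (lt_of_le_of_lt hyz hN)]
    exact etaAux_mono a N hyz
  have htend : ∀ x : NNReal, Filter.Tendsto (fun n => etaAux a n x) Filter.atTop (nhds (eta a x)) := by
    intro x
    obtain ⟨N, hN⟩ := exists_lt a ha x
    have hev : (fun n => etaAux a n x) =ᶠ[Filter.atTop] (fun _ => eta a x) := by
      filter_upwards [Filter.eventually_ge_atTop N] with m hm
      rw [etaAux_stable a hmono N x hN m hm, heq N x hN]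
    exact Filter.Tendsto.congr' hev.symm tendsto_const_nhds
  have hcont : Continuous (eta a) := by
    rw [continuous_iff_continuousAt]
    intro x
    obtain ⟨N, hN⟩ := exists_lt a ha x
    have hopen : IsOpen {y : NNReal | y < (a N : NNReal)} := isOpen_Iio
    apply ContinuousAt.congr ((etaAux_lipschitz a N).continuous.continuousAt)
    apply Filter.eventuallyEq_of_mem (hopen.mem_nhds hN)
    intro y hy
    exact (heq N y hy).symm
  refine ⟨htend, hcont, ⟨hcont, ?_⟩, hone⟩
  intro R hR ε hε
  obtain ⟨n, hn⟩ := exists_nat_gt ((R:ℝ) / ε)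
  have hRn : (R:ℝ) / ((n:ℝ) + 1) < ε := by
    rw [div_lt_iff₀ (by positivity)]
    have h1 : (R:ℝ) / ε < (n:ℝ) + 1 := by linarith
    rw [div_lt_iff₀ hε] at h1
    linarith [mul_comm ε ((n:ℝ)+1)]
  refine ⟨(a (n+1) : NNReal), ?_, ?_⟩
  · have h1 : n + 1 ≤ a (n+1) := ha.le_apply
    exact_mod_cast Nat.cast_pos.mpr (by omega)
  · intro x hx
    have hdiam : Metric.diam (eta a '' Set.Icc x (x + R)) ≤ (R:ℝ) / ((n:ℝ) + 1) := by
      apply Metric.diam_le_of_forall_dist_le (by positivity)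
      rintro _ ⟨y, hy, rfl⟩ _ ⟨z, hz, rfl⟩
      have key : ∀ y z : NNReal, y ∈ Set.Icc x (x + R) → z ∈ Set.Icc x (x + R) → y ≤ z →
          eta a z - eta a y ≤ (R:ℝ) / ((n:ℝ) + 1) := by
        intro y z hy hz hyz
        obtain ⟨N, hN⟩ := exists_lt a ha z
        have hN' : n + 1 ≤ max (n+1) N := le_max_left _ _
        have hNz : z < (a (max (n+1) N) : NNReal) :=
          lt_of_lt_of_le hN (by exact_mod_cast hmono (le_max_right (n+1) N))
        have hNy : y < (a (max (n+1) N) : NNReal) := lt_of_le_of_lt hyz hNz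
        rw [heq _ z hNz, heq _ y hNy]
        have hay : (a (n+1) : NNReal) ≤ y := le_of_lt (lt_of_lt_of_le hx hy.1)
        have h1 := etaAux_slope a hmono n (max (n+1) N) hN' y z hay hyz
        have h2 : (z:ℝ) - (y:ℝ) ≤ (R:ℝ) := by
          have hz2 : (z:ℝ) ≤ ((x + R : NNReal) : ℝ) := hz.2
          have hy1 : (x:ℝ) ≤ (y:ℝ) := hy.1
          push_cast at hz2
          linarith
        have h3 : ((z:ℝ) - y)/((n:ℝ)+1) ≤ (R:ℝ)/((n:ℝ)+1) :=
          div_le_div_of_nonneg_right h2 (by positivity) |>.trans_eq rfl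
        linarith
      rw [Real.dist_eq]
      rcases le_total y z with h | h
      · rw [abs_of_nonpos (by linarith [hmonoeta h])]
        linarith [key y z hy hz h]
      · rw [abs_of_nonneg (by linarith [hmonoeta h])]
        exact key z y hz hy h
    exact lt_of_le_of_lt hdiam hRn
end
end
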